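/- arXiv:1612.04159 — 4 statements merged into one kernel-verified Lean document; each statement's English description precedes it below -/
import Mathlib

section
/- Let (M,d) be a compact metric space, f : M → M a homeomorphism satisfying the Anosov Closing property, and A : M → M(d,ℝ) an α-Hölder continuous map. Suppose all Lyapunov exponents of (f,A) at periodic points are uniformly bounded from below: there exists c ∈ ℝ such that for every periodic point p of f with period n and every complex eigenvalue z of the matrix Aⁿ(p), one has |z| ≥ e^{cn}. Then for every f-invariant Borel probability measure μ on M, the matrix A(x) is invertible (A(x) ∈ GL(d,ℝ)) for μ-almost every x ∈ M. -/
open Filter MeasureTheory Topology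

/-- Operator norm (w.r.t. the Euclidean norm) of a square real matrix. -/
noncomputable def matNorm {m : Type*} [Fintype m] [DecidableEq m] (B : Matrix m m ℝ) : ℝ :=
  ‖LinearMap.toContinuousLinearMap (Matrix.toEuclideanLin B)‖

/-- The cocycle generated by `A` over `f`: `Aⁿ(x) = A(f^{n-1}x) ⋯ A(f x) A(x)`. -/
def cocycle {M : Type*} {m : Type*} [Fintype m] [DecidableEq m]
    (f : M → M) (A : M → Matrix m m ℝ) : ℕ → M → Matrix m m ℝ
  | 0, _ => 1
  | n + 1, x => cocycle f A n (f x) * A x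

/-- `log` with values in `[-∞, ∞)`, with `log r = -∞` for `r ≤ 0`. -/
noncomputable def elog (r : ℝ) : EReal := if r ≤ 0 then ⊥ else ((Real.log r : ℝ) : EReal)

/-- The integral `∫ log g dμ ∈ [-∞,∞)` of the `[-∞,∞)`-valued function `log ∘ g` (for `g ≥ 0`),
defined via monotone truncations. -/
noncomputable def elogIntegral {M : Type*} [MeasurableSpace M] (μ : Measure M) (g : M → ℝ) :
    EReal :=
  ⨅ m : ℕ, (((∫ x, (if g x ≤ 0 then -(m : ℝ) else max (Real.log (g x)) (-(m : ℝ))) ∂μ) : ℝ) : EReal)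

/-- The largest Lyapunov exponent `λ₁(A,μ) = inf_{n ≥ 1} (1/n) ∫ log ‖Aⁿ(x)‖ dμ(x) ∈ [-∞,∞)`. -/
noncomputable def lyapMax {M : Type*} [MeasurableSpace M] {m : Type*} [Fintype m] [DecidableEq m]
    (f : M → M) (A : M → Matrix m m ℝ) (μ : Measure M) : EReal :=
  ⨅ n : ℕ, (((((n : ℝ) + 1)⁻¹ : ℝ)) : EReal) *
    elogIntegral μ (fun x => matNorm (cocycle f A (n + 1) x))

/-- The spectral radius of a real square matrix: the largest modulus of its complex
eigenvalues. -/
noncomputable def specRad {m : Type*} [Fintype m] [DecidableEq m] (B : Matrix m m ℝ) : ℝ :=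
  sSup ((‖·‖) '' spectrum ℂ (B.map (fun r => (r : ℂ))))

/-- The largest Lyapunov exponent of the cocycle at a periodic point of period `n`:
`(1/n) log (spectral radius of Aⁿ(p)) ∈ [-∞,∞)`. -/
noncomputable def lyapMaxPeriodic {M : Type*} {m : Type*} [Fintype m] [DecidableEq m]
    (f : M → M) (A : M → Matrix m m ℝ) (n : ℕ) (p : M) : EReal :=
  (((n : ℝ)⁻¹ : ℝ) : EReal) * elog (specRad (cocycle f A n p))

/-- The Anosov Closing property for a map of a metric space. -/
def AnosovClosing {M : Type*} [MetricSpace M] (f : M → M) : Prop :=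
  ∃ C₁ ε₀ θ : ℝ, 0 < C₁ ∧ 0 < ε₀ ∧ 0 < θ ∧
    ∀ (z : M) (n : ℕ), dist (f^[n] z) z < ε₀ →
      ∃ p : M, f^[n] p = p ∧ ∀ j ≤ n,
        dist (f^[j] z) (f^[j] p) ≤
          C₁ * Real.exp (-θ * min (j : ℝ) ((n : ℝ) - (j : ℝ))) * dist (f^[n] z) z

/-- `A` is `α`-Hölder continuous (w.r.t. the operator norm on matrices). -/
def IsHolderMat {M : Type*} [MetricSpace M] {m : Type*} [Fintype m] [DecidableEq m]
    (A : M → Matrix m m ℝ) (α : ℝ) : Prop :=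
  ∃ C₂ : ℝ, 0 < C₂ ∧ ∀ x y : M, matNorm (A x - A y) ≤ C₂ * dist x y ^ α

/-- The `i`-th compound (exterior power) matrix of `B`: the matrix of `ΛⁱB` acting on
`Λⁱ(ℝ^d)` in the standard basis of increasing wedges of basis vectors. -/
noncomputable def compound {d : ℕ} (i : ℕ) (B : Matrix (Fin d) (Fin d) ℝ) :
    Matrix {s : Finset (Fin d) // s.card = i} {s : Finset (Fin d) // s.card = i} ℝ :=
  Matrix.of fun S T => Matrix.det (Matrix.of fun a b : Fin i =>
    B (S.1.orderIsoOfFin S.2 a).1 (T.1.orderIsoOfFin T.2 b).1)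

/-!
Suppose `A x` is singular on a set `Z` of positive `μ`-measure. Then for small `η > 0` the
continuous function `log (|det A| + η)` has integral `< c d - 1`, so by the maximal ergodic
theorem there is a set of positive measure of points all of whose Birkhoff sums of it stay
below `(c d - 1) n`. By Poincaré recurrence one of these points `x` almost returns at some time
`n`, and the Anosov Closing property gives a periodic point `p` of period `n` whose orbit
shadows that of `x` so closely that `|det A (fʲ p)| ≤ |det A (fʲ x)| + η` for `j < n`. Hence
`|det Aⁿ(p)| ≤ e^{(c d - 1) n}`, whereas the eigenvalue bound forces `|det Aⁿ(p)| ≥ e^{c d n}`.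
-/

theorem continuous_of_dist_le_mul_rpow {X Y : Type*} [PseudoMetricSpace X] [PseudoMetricSpace Y]
    {g : X → Y} {C α : ℝ} (hα : 0 < α) (h : ∀ x y, dist (g x) (g y) ≤ C * dist x y ^ α) :
    Continuous g := by
  refine continuous_iff_continuousAt.2 fun x => tendsto_iff_dist_tendsto_zero.2 ?_
  have hlim : Tendsto (fun y => C * dist y x ^ α) (𝓝 x) (𝓝 (C * dist x x ^ α)) :=
    ((tendsto_id.dist tendsto_const_nhds).rpow_const (Or.inr hα.le)).const_mul C
  rw [dist_self, Real.zero_rpow hα.ne', mul_zero] at hlim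
  exact squeeze_zero (fun _ => dist_nonneg) (fun y => h y x) hlim

open scoped Matrix.Norms.L2Operator in
theorem IsHolderMat.continuous {M : Type*} [MetricSpace M] {m : Type*} [Fintype m] [DecidableEq m]
    {A : M → Matrix m m ℝ} {α : ℝ} (hA : IsHolderMat A α) (hα : 0 < α) : Continuous A := by
  obtain ⟨C, -, hC⟩ := hA
  exact continuous_of_dist_le_mul_rpow hα fun x y => (dist_eq_norm _ _).trans_le (hC x y)

theorem pow_card_le_abs_det_of_le_norm_spectrum {n : Type*} [Fintype n] [DecidableEq n]
    (B : Matrix n n ℝ) {r : ℝ} (hr : 0 ≤ r)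
    (h : ∀ z ∈ spectrum ℂ (B.map (fun x => (x : ℂ))), r ≤ ‖z‖) :
    r ^ Fintype.card n ≤ |B.det| := by
  set P := (B.map (fun x => (x : ℂ))).charpoly
  have hcard : Multiset.card P.roots = Fintype.card n := by
    rw [IsAlgClosed.card_roots_eq_natDegree, Matrix.charpoly_natDegree_eq_dim]
  have hdet : |B.det| = (P.roots.map (‖·‖)).prod := by
    rw [show (‖·‖) = ⇑(normHom (α := ℂ)) from rfl, ← map_multiset_prod,
      ← Matrix.det_eq_prod_roots_charpoly, ← Real.norm_eq_abs, ← Complex.norm_real,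
      ← Complex.ofRealHom_eq_coe, RingHom.map_det]
    rfl
  rw [hdet, ← hcard, ← Multiset.prod_replicate, ← Multiset.map_const']
  refine Multiset.prod_map_le_prod_map₀ _ _ (fun _ _ => hr) fun z hz => h z ?_
  exact Matrix.mem_spectrum_of_isRoot_charpoly (Polynomial.isRoot_of_mem_roots hz)

theorem det_cocycle {M m : Type*} [Fintype m] [DecidableEq m] (f : M → M) (A : M → Matrix m m ℝ)
    (n : ℕ) (x : M) : (cocycle f A n x).det = ∏ j ∈ Finset.range n, (A (f^[j] x)).det := by
  induction n generalizing x with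
  | zero => simp [cocycle]
  | succ n ih => simp [cocycle, Matrix.det_mul, ih, Finset.prod_range_succ', mul_comm]

theorem exp_birkhoffSum_log {α : Type*} (f : α → α) {g : α → ℝ} (hg : ∀ x, 0 < g x) (n : ℕ)
    (x : α) : Real.exp (birkhoffSum f (fun y => Real.log (g y)) n x) =
      ∏ j ∈ Finset.range n, g (f^[j] x) := by
  simp only [birkhoffSum, Real.exp_sum, Real.exp_log (hg _)]

/-- Garsia's maxima: `maxBirkhoffSum f g N x = max_{k ≤ N} birkhoffSum f g k x`. -/
noncomputable def maxBirkhoffSum {α : Type*} (f : α → α) (g : α → ℝ) : ℕ → α → ℝ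
  | 0, _ => 0
  | N + 1, x => max 0 (g x + maxBirkhoffSum f g N (f x))

section MaxBirkhoffSum

variable {α : Type*} {f : α → α} {g : α → ℝ}

theorem maxBirkhoffSum_nonneg (N : ℕ) (x : α) : 0 ≤ maxBirkhoffSum f g N x := by
  cases N with
  | zero => exact le_rfl
  | succ N => exact le_max_left _ _

theorem maxBirkhoffSum_le_succ (N : ℕ) (x : α) :
    maxBirkhoffSum f g N x ≤ maxBirkhoffSum f g (N + 1) x := by
  induction N generalizing x with
  | zero => exact maxBirkhoffSum_nonneg 1 x
  | succ N ih => exact max_le_max le_rfl (by linarith [ih (f x)])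

theorem birkhoffSum_le_maxBirkhoffSum {k N : ℕ} (hk : k ≤ N) (x : α) :
    birkhoffSum f g k x ≤ maxBirkhoffSum f g N x := by
  induction N generalizing k x with
  | zero => simp [Nat.le_zero.1 hk, maxBirkhoffSum]
  | succ N ih =>
    cases k with
    | zero => simpa using maxBirkhoffSum_nonneg (N + 1) x
    | succ k =>
      rw [birkhoffSum_succ']
      exact le_max_of_le_right (by linarith [ih (k := k) (by omega) (f x)])

theorem exists_maxBirkhoffSum_eq_birkhoffSum (N : ℕ) (x : α) :
    ∃ k ≤ N, maxBirkhoffSum f g N x = birkhoffSum f g k x := by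
  induction N generalizing x with
  | zero => exact ⟨0, le_rfl, rfl⟩
  | succ N ih =>
    obtain ⟨k, hk, hx⟩ := ih (f x)
    rcases le_total (g x + maxBirkhoffSum f g N (f x)) 0 with h | h
    · exact ⟨0, by omega, max_eq_left h⟩
    · exact ⟨k + 1, by omega, by rw [birkhoffSum_succ', ← hx]; exact max_eq_right h⟩

theorem iUnion_setOf_maxBirkhoffSum_pos :
    ⋃ N, {x | 0 < maxBirkhoffSum f g N x} = {x | ∃ n, 0 < birkhoffSum f g n x} := by
  ext x
  simp only [Set.mem_iUnion]
  constructor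
  · rintro ⟨N, hN⟩
    obtain ⟨k, -, hk⟩ := exists_maxBirkhoffSum_eq_birkhoffSum N x
    exact ⟨k, hk ▸ hN⟩
  · rintro ⟨n, hn⟩
    exact ⟨n, hn.trans_le (birkhoffSum_le_maxBirkhoffSum le_rfl x)⟩

variable [MeasurableSpace α]

theorem measurable_maxBirkhoffSum (hf : Measurable f) (hg : Measurable g) (N : ℕ) :
    Measurable (maxBirkhoffSum f g N) := by
  induction N with
  | zero => exact measurable_const
  | succ N ih => exact measurable_const.max (hg.add (ih.comp hf))

theorem measurableSet_setOf_maxBirkhoffSum_pos (hf : Measurable f) (hg : Measurable g) (N : ℕ) :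
    MeasurableSet {x | 0 < maxBirkhoffSum f g N x} :=
  measurableSet_lt measurable_const (measurable_maxBirkhoffSum hf hg N)

variable {μ : Measure α}

theorem integrable_maxBirkhoffSum (hf : MeasurePreserving f μ μ) (hg : Integrable g μ) (N : ℕ) :
    Integrable (maxBirkhoffSum f g N) μ := by
  induction N with
  | zero => exact integrable_zero α ℝ μ
  | succ N ih => exact (integrable_zero α ℝ μ).sup (hg.add (hf.integrable_comp_of_integrable ih))

theorem setIntegral_setOf_maxBirkhoffSum_pos_nonneg (hf : MeasurePreserving f μ μ)
    (hgm : Measurable g) (hg : Integrable g μ) (N : ℕ) :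
    0 ≤ ∫ x in {x | 0 < maxBirkhoffSum f g N x}, g x ∂μ := by
  cases N with
  | zero => simp [maxBirkhoffSum]
  | succ N =>
    set E := {x | 0 < maxBirkhoffSum f g (N + 1) x}
    set h : α → ℝ := fun x => maxBirkhoffSum f g (N + 1) x - maxBirkhoffSum f g N (f x)
    have hE : MeasurableSet E := measurableSet_setOf_maxBirkhoffSum_pos hf.measurable hgm (N + 1)
    have hΦ := integrable_maxBirkhoffSum hf hg
    have hΦf : Integrable (fun x => maxBirkhoffSum f g N (f x)) μ :=
      hf.integrable_comp_of_integrable (hΦ N)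
    have hgE : ∀ x ∈ E, g x = h x := fun x hx => by
      have : 0 < g x + maxBirkhoffSum f g N (f x) := by simpa [E, maxBirkhoffSum] using hx
      simp [h, maxBirkhoffSum, max_eq_right this.le]
    have hEc : ∫ x in Eᶜ, h x ∂μ ≤ 0 := setIntegral_nonpos hE.compl fun x hx => by
      have : maxBirkhoffSum f g (N + 1) x = 0 :=
        le_antisymm (not_lt.1 hx) (maxBirkhoffSum_nonneg _ x)
      simp [h, this, maxBirkhoffSum_nonneg N (f x)]
    have hint : 0 ≤ ∫ x, h x ∂μ := by
      have hcomp : ∫ x, maxBirkhoffSum f g N (f x) ∂μ = ∫ x, maxBirkhoffSum f g N x ∂μ := by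
        conv_rhs => rw [← hf.map_eq]
        exact (integral_map hf.aemeasurable
          (measurable_maxBirkhoffSum hf.measurable hgm N).aestronglyMeasurable).symm
      rw [integral_sub (hΦ (N + 1)) hΦf, hcomp, sub_nonneg]
      exact integral_mono (hΦ N) (hΦ (N + 1)) (maxBirkhoffSum_le_succ N)
    rw [setIntegral_congr_fun hE hgE]
    linarith [integral_add_compl (f := h) hE ((hΦ (N + 1)).sub hΦf)]

end MaxBirkhoffSum

section MaximalErgodic

variable {α : Type*} [MeasurableSpace α] {μ : Measure α} {f : α → α} {g : α → ℝ}

theorem setIntegral_setOf_exists_birkhoffSum_pos_nonneg (hf : MeasurePreserving f μ μ)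
    (hgm : Measurable g) (hg : Integrable g μ) :
    0 ≤ ∫ x in {x | ∃ n, 0 < birkhoffSum f g n x}, g x ∂μ := by
  rw [← iUnion_setOf_maxBirkhoffSum_pos]
  have hmono : Monotone fun N => {x | 0 < maxBirkhoffSum f g N x} :=
    monotone_nat_of_le_succ fun N x hx => hx.trans_le (maxBirkhoffSum_le_succ N x)
  exact ge_of_tendsto' (tendsto_setIntegral_of_monotone
    (measurableSet_setOf_maxBirkhoffSum_pos hf.measurable hgm) hmono hg.integrableOn)
    (setIntegral_setOf_maxBirkhoffSum_pos_nonneg hf hgm hg)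

theorem measure_setOf_forall_birkhoffSum_nonpos_ne_zero (hf : MeasurePreserving f μ μ)
    (hgm : Measurable g) (hg : Integrable g μ) (hneg : ∫ x, g x ∂μ < 0) :
    μ {x | ∀ n, birkhoffSum f g n x ≤ 0} ≠ 0 := by
  set G := {x | ∀ n, birkhoffSum f g n x ≤ 0}
  have hGc : Gᶜ = {x | ∃ n, 0 < birkhoffSum f g n x} := by ext x; simp [G]
  have hG : MeasurableSet G := by
    rw [← MeasurableSet.compl_iff, hGc, ← iUnion_setOf_maxBirkhoffSum_pos]
    exact .iUnion (measurableSet_setOf_maxBirkhoffSum_pos hf.measurable hgm)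
  intro hG0
  have hsplit := integral_add_compl hG hg
  rw [Measure.restrict_eq_zero.2 hG0, integral_zero_measure, zero_add, hGc] at hsplit
  linarith [setIntegral_setOf_exists_birkhoffSum_pos_nonneg hf hgm hg]

end MaximalErgodic

theorem MeasureTheory.Conservative.exists_mem_dist_iterate_lt {α : Type*} [PseudoMetricSpace α]
    [SecondCountableTopology α] [MeasurableSpace α] [OpensMeasurableSpace α] {μ : Measure α}
    {f : α → α} (hf : Conservative f μ) {s : Set α} (hs : μ s ≠ 0) {ε : ℝ} (hε : 0 < ε) :
    ∃ x ∈ s, ∃ n ≠ 0, dist (f^[n] x) x < ε := by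
  obtain ⟨x, hxs, hx⟩ :=
    ((frequently_ae_mem_iff.2 hs).and_eventually hf.ae_frequently_mem_of_mem_nhds).exists
  obtain ⟨n, hn, hfn⟩ := (hx _ (Metric.ball_mem_nhds x hε)).forall_exists_of_atTop 1
  exact ⟨x, hxs, n, by omega, hfn⟩

theorem AnosovClosing.exists_periodic_shadowing {M : Type*} [MetricSpace M] {f : M → M}
    (hf : AnosovClosing f) {δ : ℝ} (hδ : 0 < δ) :
    ∃ ε > 0, ∀ (z : M) (n : ℕ), dist (f^[n] z) z < ε →
      ∃ p, f^[n] p = p ∧ ∀ j ≤ n, dist (f^[j] z) (f^[j] p) < δ := by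
  obtain ⟨C, ε₀, θ, hC, hε₀, hθ, hclose⟩ := hf
  refine ⟨min ε₀ (δ / C), by positivity, fun z n hz => ?_⟩
  obtain ⟨p, hp, hdist⟩ := hclose z n (hz.trans_le (min_le_left _ _))
  refine ⟨p, hp, fun j hj => (hdist j hj).trans_lt ?_⟩
  have hexp : Real.exp (-θ * min (j : ℝ) (n - j)) ≤ 1 := by
    have : (0 : ℝ) ≤ min (j : ℝ) (n - j) := le_min j.cast_nonneg (by simp [hj])
    exact Real.exp_le_one_iff.2 (by nlinarith)
  calc C * Real.exp (-θ * min (j : ℝ) (n - j)) * dist (f^[n] z) z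
      ≤ C * dist (f^[n] z) z := by gcongr; exact mul_le_of_le_one_right hC.le hexp
    _ < C * (δ / C) := by gcongr; exact hz.trans_le (min_le_right _ _)
    _ = δ := mul_div_cancel₀ δ hC.ne'

theorem exists_integral_log_add_lt {X : Type*} [TopologicalSpace X] [CompactSpace X]
    [MeasurableSpace X] [OpensMeasurableSpace X] {μ : Measure X} [IsFiniteMeasure μ] {D : X → ℝ}
    (hD : Continuous D) (hD0 : ∀ x, 0 ≤ D x) (hZ : μ {x | D x = 0} ≠ 0) (b : ℝ) :
    ∃ η > 0, ∫ x, Real.log (D x + η) ∂μ < b := by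
  set Z := {x | D x = 0}
  obtain ⟨K, hK⟩ := (isCompact_range hD).bddAbove
  obtain ⟨x₀, hx₀⟩ := nonempty_of_measure_ne_zero hZ
  have hK0 : 0 ≤ K := (hD0 x₀).trans (hK ⟨x₀, rfl⟩)
  set R := Real.log (K + 1)
  have hR : 0 ≤ R := Real.log_nonneg (by linarith)
  have hZm : MeasurableSet Z := measurableSet_eq_fun hD.measurable measurable_const
  have hbound : ∀ η ∈ Set.Ioc (0 : ℝ) 1,
      ∫ x, Real.log (D x + η) ∂μ ≤ μ.real Z * Real.log η + μ.real Set.univ * R := by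
    rintro η ⟨hη0, hη1⟩
    have hint : Integrable (fun x => Real.log (D x + η)) μ :=
      ((hD.add continuous_const).log fun x => (add_pos_of_nonneg_of_pos (hD0 x) hη0).ne')
        |>.integrable_of_hasCompactSupport (HasCompactSupport.of_compactSpace _)
    have hle : ∀ x, Real.log (D x + η) ≤ Z.indicator (fun _ => Real.log η) x + R := by
      intro x
      by_cases hx : x ∈ Z
      · simp [Set.indicator_of_mem hx, show D x = 0 from hx, hR]
      · rw [Set.indicator_of_notMem hx, zero_add]
        exact Real.log_le_log (by linarith [hD0 x]) (by linarith [hK ⟨x, rfl⟩])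
    calc ∫ x, Real.log (D x + η) ∂μ
        ≤ ∫ x, (Z.indicator (fun _ => Real.log η) x + R) ∂μ :=
          integral_mono hint (((integrable_const _).indicator hZm).add (integrable_const R)) hle
      _ = μ.real Z * Real.log η + μ.real Set.univ * R := by
          rw [integral_add ((integrable_const _).indicator hZm) (integrable_const R),
            integral_indicator_const _ hZm, integral_const, smul_eq_mul, smul_eq_mul]
  have hZpos : 0 < μ.real Z := ENNReal.toReal_pos hZ (measure_ne_top μ Z)
  have htend : Tendsto (fun η => μ.real Z * Real.log η + μ.real Set.univ * R) (𝓝[>] 0) atBot :=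
    tendsto_atBot_add_const_right _ _ (Real.tendsto_log_nhdsGT_zero.const_mul_atBot hZpos)
  obtain ⟨η, hηb, hη⟩ :=
    ((htend.eventually (eventually_lt_atBot b)).and (Ioc_mem_nhdsGT one_pos)).exists
  exact ⟨η, hη.1, (hbound η hη).trans_lt hηb⟩

theorem AnosovClosing.exists_periodic_prod_le_exp {M : Type*} [MetricSpace M] [CompactSpace M]
    [MeasurableSpace M] [BorelSpace M] {f : M → M} (hf : AnosovClosing f) {μ : Measure M}
    [IsProbabilityMeasure μ] (hμ : MeasurePreserving f μ μ) {g : M → ℝ} (hg : Continuous g)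
    (hg0 : ∀ x, 0 ≤ g x) {η b : ℝ} (hη : 0 < η) (hb : ∫ x, Real.log (g x + η) ∂μ < b) :
    ∃ p n, n ≠ 0 ∧ f^[n] p = p ∧ ∏ j ∈ Finset.range n, g (f^[j] p) ≤ Real.exp (b * n) := by
  have hgη : ∀ x, 0 < g x + η := fun x => add_pos_of_nonneg_of_pos (hg0 x) hη
  have hlogc : Continuous fun x => Real.log (g x + η) :=
    (hg.add continuous_const).log fun x => (hgη x).ne'
  have hlog : Integrable (fun x => Real.log (g x + η)) μ :=
    hlogc.integrable_of_hasCompactSupport (.of_compactSpace _)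
  have hneg : ∫ x, (Real.log (g x + η) - b) ∂μ < 0 := by
    rw [integral_sub hlog (integrable_const _), integral_const, probReal_univ, one_smul]
    linarith
  obtain ⟨δ, hδ, hgδ⟩ :=
    Metric.uniformContinuous_iff.1 (CompactSpace.uniformContinuous_of_continuous hg) η hη
  obtain ⟨ε, hε, hclose⟩ := hf.exists_periodic_shadowing hδ
  obtain ⟨x, hx, n, hn, hxn⟩ := hμ.conservative.exists_mem_dist_iterate_lt
    (measure_setOf_forall_birkhoffSum_nonpos_ne_zero hμ (hlogc.sub continuous_const).measurable
      (hlog.sub (integrable_const _)) hneg) hε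
  obtain ⟨p, hp, hpx⟩ := hclose x n hxn
  have hsum : birkhoffSum f (fun y => Real.log (g y + η)) n x ≤ b * n := by
    have h := hx n
    rw [birkhoffSum_sub, show birkhoffSum f (fun _ => b) n x = b * n by
      simp [birkhoffSum, mul_comm]] at h
    linarith
  refine ⟨p, n, hn, hp, ?_⟩
  calc ∏ j ∈ Finset.range n, g (f^[j] p)
      ≤ ∏ j ∈ Finset.range n, (g (f^[j] x) + η) := by
        refine Finset.prod_le_prod (fun _ _ => hg0 _) fun j hj => ?_
        have := hgδ (hpx j (Finset.mem_range.1 hj).le)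
        rw [Real.dist_eq, abs_sub_lt_iff] at this
        linarith
    _ = Real.exp (birkhoffSum f (fun y => Real.log (g y + η)) n x) :=
        (exp_birkhoffSum_log f hgη n x).symm
    _ ≤ Real.exp (b * n) := Real.exp_le_exp.2 hsum

theorem invertible_ae_of_periodic_exponents_bounded_below_general
    {d : ℕ} {M : Type*} [MetricSpace M] [CompactSpace M] [MeasurableSpace M] [BorelSpace M]
    (f : M → M) (hAC : AnosovClosing f)
    (α : ℝ) (hα : 0 < α) (A : M → Matrix (Fin d) (Fin d) ℝ) (hA : IsHolderMat A α)
    (c : ℝ)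
    (hbound : ∀ (p : M) (n : ℕ), 1 ≤ n → f^[n] p = p →
      ∀ z ∈ spectrum ℂ ((cocycle f A n p).map (fun r => (r : ℂ))),
        Real.exp (c * n) ≤ ‖z‖) :
    ∀ μ : Measure M, IsProbabilityMeasure μ → MeasurePreserving f μ μ →
      ∀ᵐ x ∂μ, IsUnit (A x) := by
  intro μ _ hμ
  set D : M → ℝ := fun x => |(A x).det|
  have hD : Continuous D := (hA.continuous hα).matrix_det.abs
  rw [ae_iff]
  by_contra hS
  have hZ : μ {x | D x = 0} ≠ 0 := by simpa [D, Matrix.isUnit_iff_isUnit_det] using hS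
  obtain ⟨η, hη, hint⟩ := exists_integral_log_add_lt hD (fun _ => abs_nonneg _) hZ (c * d - 1)
  obtain ⟨p, n, hn, hp, hprod⟩ :=
    hAC.exists_periodic_prod_le_exp hμ hD (fun _ => abs_nonneg _) hη hint
  have hlower : Real.exp (d * (c * n)) ≤ |(cocycle f A n p).det| := by
    simpa [Real.exp_nat_mul] using pow_card_le_abs_det_of_le_norm_spectrum _
      (Real.exp_pos _).le (hbound p n (by omega) hp)
  have hupper : |(cocycle f A n p).det| ≤ Real.exp ((c * d - 1) * n) := by
    rwa [det_cocycle, Finset.abs_prod]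
  have hn1 : (1 : ℝ) ≤ n := by exact_mod_cast Nat.one_le_iff_ne_zero.2 hn
  nlinarith [Real.exp_le_exp.1 (hlower.trans hupper)]

/-- **Corollary.** If `f` is a homeomorphism of a compact metric space satisfying the Anosov
Closing property, `A` is `α`-Hölder, and all Lyapunov exponents of `(f, A)` at periodic points
are uniformly bounded from below (every complex eigenvalue `z` of `Aⁿ(p)`, for `p` of period
`n`, satisfies `|z| ≥ e^{c n}`), then for every `f`-invariant Borel probability measure `μ`,
the matrix `A x` is invertible for `μ`-almost every `x`. -/
theorem invertible_ae_of_periodic_exponents_bounded_below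
    {d : ℕ} {M : Type*} [MetricSpace M] [CompactSpace M] [MeasurableSpace M] [BorelSpace M]
    (f : M → M) (hf : IsHomeomorph f) (hAC : AnosovClosing f)
    (α : ℝ) (hα : 0 < α) (A : M → Matrix (Fin d) (Fin d) ℝ) (hA : IsHolderMat A α)
    (c : ℝ)
    (hbound : ∀ (p : M) (n : ℕ), 1 ≤ n → f^[n] p = p →
      ∀ z ∈ spectrum ℂ ((cocycle f A n p).map (fun r => (r : ℂ))),
        Real.exp (c * n) ≤ ‖z‖) :
    ∀ μ : Measure M, IsProbabilityMeasure μ → MeasurePreserving f μ μ →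
      ∀ᵐ x ∂μ, IsUnit (A x) :=
  invertible_ae_of_periodic_exponents_bounded_below_general f hAC α hα A hA c hbound
end

section
/- Let M = {0,1}^ℤ with the left shift f((x_i)_{i∈ℤ}) = (x_{i+1})_{i∈ℤ}, and for θ ∈ (0,1) equip M with the metric d(x,y) = θ^{N(x,y)} where N(x,y) = max{N ≥ 0 : x_n = y_n for all |n| < N} (and d(x,x) = 0). Let q ∈ M be the point with q_i = 1 for all i ≠ −1 and q_{−1} = 0, let a > 1 satisfy aθ > 1, and define A : M → ℝ by A(x) = (a/θ³)·d(x,q) if d(x,q) ≤ θ³ and A(x) = a otherwise. Then A(q) = 0, while for every periodic point p of f of period m one has (1/m)·Σ_{j=0}^{m−1} log A(fʲ(p)) ≥ log(aθ) > 0; in particular the Lyapunov exponent of the scalar cocycle (f,A) at every periodic point is bounded below by log(aθ). -/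
open Filter Topology Classical

/-- The left shift on the space `{0,1}^ℤ` of bilateral sequences. -/
def shiftMap (x : ℤ → Bool) : ℤ → Bool := fun i => x (i + 1)

/-- The distance `d(x,y) = θ^{N(x,y)}` on `{0,1}^ℤ`, where
`N(x,y) = max {N ≥ 0 : xₙ = yₙ for all |n| < N}` and `d(x,x) = 0`. -/
noncomputable def shiftDist (θ : ℝ) (x y : ℤ → Bool) : ℝ :=
  if x = y then 0 else θ ^ sSup {N : ℕ | ∀ n : ℤ, |n| < (N : ℤ) → x n = y n}

/-- The point `q` with `q i = 1` for `i ≠ -1` and `q₋₁ = 0`. -/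
def qpt : ℤ → Bool := fun i => if i = -1 then false else true

/-- The map `A(x) = (a/θ³) d(x,q)` if `d(x,q) ≤ θ³`, and `A(x) = a` otherwise. -/
noncomputable def Afun (θ a : ℝ) (x : ℤ → Bool) : ℝ :=
  if shiftDist θ x qpt ≤ θ ^ 3 then (a / θ ^ 3) * shiftDist θ x qpt else a

/-!
Write `N(x) = N(x, q)`. Off `q`, `A(x) = a θ^{(N(x) - 3)⁺} ≥ a θ^{N(x) - 1}`, so it suffices that
`∑_{j<m} (N(fʲ p) - 1) ≤ m` for a point `p` of period `m`. If `N(fʲ p) = L + 1 ≥ 2`, then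
`p_{j-1} = 0` and `p_j = ⋯ = p_{j+L-1} = 1`, so `j - 1` is the last zero of `p` before each of
the positions `j, …, j+L-1`. Hence these blocks of positions are pairwise disjoint modulo `m`
for distinct `j < m`, and their total length is at most `m`.
-/

open Finset Function

theorem shiftMap_iterate_apply (x : ℤ → Bool) (k : ℕ) (i : ℤ) :
    shiftMap^[k] x i = x (i + k) := by
  induction k generalizing i with
  | zero => simp
  | succ k ih =>
    rw [iterate_succ_apply', shiftMap, ih]
    push_cast
    ring_nf

theorem periodic_of_shiftMap_iterate_eq {p : ℤ → Bool} {m : ℕ} (hp : shiftMap^[m] p = p) :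
    Periodic p m := fun i =>
  (shiftMap_iterate_apply p m i).symm.trans (congrFun hp i)

theorem Function.Periodic.shiftMap_iterate {p : ℤ → Bool} {c : ℤ} (hp : Periodic p c) (k : ℕ) :
    Periodic (shiftMap^[k] p) c := fun i => by
  simp only [shiftMap_iterate_apply, add_right_comm i c, hp _]

theorem not_periodic_qpt {c : ℤ} (hc : c ≠ 0) : ¬ Periodic qpt c := fun h => by
  have := h (-1)
  simp [qpt, hc] at this

/-- `N(x,y)`, the exponent in `shiftDist`. -/
noncomputable def agreeLength (x y : ℤ → Bool) : ℕ :=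
  sSup {N : ℕ | ∀ n : ℤ, |n| < (N : ℤ) → x n = y n}

theorem shiftDist_of_ne {θ : ℝ} {x y : ℤ → Bool} (h : x ≠ y) :
    shiftDist θ x y = θ ^ agreeLength x y := by
  rw [shiftDist, if_neg h, agreeLength]

theorem agreeLength_spec (x y : ℤ → Bool) {n : ℤ} (hn : |n| < agreeLength x y) : x n = y n := by
  by_cases hxy : x = y
  · rw [hxy]
  obtain ⟨n₀, hn₀⟩ : ∃ n₀, x n₀ ≠ y n₀ := by
    by_contra! h
    exact hxy (funext h)
  have hbdd : BddAbove {N : ℕ | ∀ n : ℤ, |n| < (N : ℤ) → x n = y n} := by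
    refine ⟨n₀.natAbs, fun N hN => ?_⟩
    by_contra! hlt
    exact hn₀ (hN n₀ (by rw [Int.abs_eq_natAbs]; exact_mod_cast hlt))
  exact Nat.sSup_mem ⟨0, fun n hn => absurd hn (by simp)⟩ hbdd n hn

theorem Afun_qpt {θ : ℝ} (hθ : 0 ≤ θ) (a : ℝ) : Afun θ a qpt = 0 := by
  rw [Afun, shiftDist, if_pos rfl, if_pos (by positivity), mul_zero]

theorem Afun_of_ne_qpt {θ : ℝ} (a : ℝ) (hθ₀ : 0 < θ) (hθ₁ : θ < 1) {x : ℤ → Bool}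
    (hx : x ≠ qpt) : Afun θ a x = a * θ ^ (agreeLength x qpt - 3) := by
  rw [Afun, shiftDist_of_ne hx]
  by_cases h3 : 3 ≤ agreeLength x qpt
  · rw [if_pos (pow_le_pow_of_le_one hθ₀.le hθ₁.le h3), ← Nat.add_sub_cancel' h3, pow_add,
      Nat.add_sub_cancel_left]
    field_simp
  · rw [if_neg (not_le.2 (pow_lt_pow_right_of_lt_one₀ hθ₀ hθ₁ (by omega))),
      Nat.sub_eq_zero_of_le (by omega), pow_zero, mul_one]

theorem log_Afun_ge {θ a : ℝ} (ha : 0 < a) (hθ₀ : 0 < θ) (hθ₁ : θ < 1) {x : ℤ → Bool}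
    (hx : x ≠ qpt) :
    Real.log a + ((agreeLength x qpt - 1 : ℕ) : ℝ) * Real.log θ ≤ Real.log (Afun θ a x) := by
  rw [← Real.log_pow, ← Real.log_mul ha.ne' (by positivity), Afun_of_ne_qpt a hθ₀ hθ₁ hx]
  exact Real.log_le_log (by positivity)
    (mul_le_mul_of_nonneg_left (pow_le_pow_of_le_one hθ₀.le hθ₁.le (by omega)) ha.le)

theorem isGreatest_false_of_run {p : ℤ → Bool} {a : ℤ} {l u : ℕ} (hu : u < l)
    (hrun : ∀ t : ℕ, t < l → p (a - 1) = false ∧ p (a + t) = true) :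
    IsGreatest {i | i ≤ a + u ∧ p i = false} (a - 1) := by
  refine ⟨⟨by omega, (hrun u hu).1⟩, fun i ⟨hiu, hi⟩ => ?_⟩
  by_contra! hai
  have := (hrun (i - a).toNat (by omega)).2
  rw [show a + (i - a).toNat = i by omega, hi] at this
  exact Bool.false_ne_true this

theorem sum_le_of_periodic_of_runs {p : ℤ → Bool} {m : ℕ} (hp : Periodic p m) (L : ℕ → ℕ)
    (hL : ∀ j t : ℕ, t < L j → p (j - 1) = false ∧ p (j + t) = true) :
    ∑ j ∈ range m, L j ≤ m := by
  obtain rfl | hm := m.eq_zero_or_pos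
  · simp
  have : NeZero m := ⟨hm.ne'⟩
  have hinj : Set.InjOn (fun x : (_ : ℕ) × ℕ => ((x.1 + x.2 : ℕ) : ZMod m))
      ((range m).sigma fun j => range (L j)) := by
    rintro ⟨j, t⟩ hjt ⟨j', t'⟩ hjt' heq
    simp only [coe_sigma, Set.mem_sigma_iff, coe_range, Set.mem_Iio] at hjt hjt' heq
    obtain ⟨k, hk⟩ := (ZMod.intCast_eq_intCast_iff_dvd_sub ((j + t : ℕ) : ℤ) (j' + t' : ℕ) m).1
      (by exact_mod_cast heq)
    have hper : ∀ x, p (x - m * k) = p x := fun x => by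
      simpa only [Int.cast_id, mul_comm] using hp.sub_int_mul_eq (x := x) k
    -- shifting the run at `j'` back by `k` periods makes it end where the run at `j` ends
    set b : ℤ := j' - m * k
    have hj := isGreatest_false_of_run hjt.2 (hL j)
    have hb := isGreatest_false_of_run (p := p) (a := b) hjt'.2 fun s hs => by
      rw [sub_right_comm, hper, sub_add_eq_add_sub, hper]
      exact hL j' s hs
    have hend : b + t' = j + t := by push_cast at hk; linarith
    have hjb : (j : ℤ) = b := by linarith [hj.unique (hend ▸ hb)]
    have hk0 : (j' : ℤ) - j = 0 :=
      Int.eq_zero_of_abs_lt_dvd (m := m) ⟨k, by linarith⟩ (abs_sub_lt_iff.2 ⟨by omega, by omega⟩)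
    obtain rfl : j = j' := by omega
    obtain rfl : t = t' := by omega
    rfl
  calc ∑ j ∈ range m, L j = ((range m).sigma fun j => range (L j)).card := by
        simp only [card_sigma, card_range]
    _ ≤ Fintype.card (ZMod m) := card_le_card_of_injOn _ (fun _ _ => mem_coe.2 (mem_univ _)) hinj
    _ = m := ZMod.card m

theorem sum_agreeLength_sub_one_le {p : ℤ → Bool} {m : ℕ} (hp : Periodic p m) :
    ∑ j ∈ range m, (agreeLength (shiftMap^[j] p) qpt - 1) ≤ m := by
  refine sum_le_of_periodic_of_runs hp _ fun j t ht => ⟨?_, ?_⟩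
  · have := agreeLength_spec (shiftMap^[j] p) qpt (n := -1) (by simp; omega)
    rwa [shiftMap_iterate_apply, neg_add_eq_sub] at this
  · have := agreeLength_spec (shiftMap^[j] p) qpt (n := t) (by simp; omega)
    rwa [shiftMap_iterate_apply, add_comm] at this

/-- **Example.** For `θ ∈ (0,1)` and `a > 1` with `aθ > 1`, the scalar cocycle generated by
`A` over the left shift satisfies `A(q) = 0`, while at every periodic point `p` of period `m`
the Lyapunov exponent `(1/m) ∑_{j<m} log A(fʲ(p))` is bounded below by `log (aθ) > 0`. -/
theorem shift_example_lyapunov_positive_at_periodic_points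
    (θ a : ℝ) (hθ₀ : 0 < θ) (hθ₁ : θ < 1) (ha : 1 < a) (haθ : 1 < a * θ) :
    Afun θ a qpt = 0 ∧ 0 < Real.log (a * θ) ∧
    ∀ (p : ℤ → Bool) (m : ℕ), 1 ≤ m → shiftMap^[m] p = p →
      Real.log (a * θ) ≤
        (m : ℝ)⁻¹ * ∑ j ∈ Finset.range m, Real.log (Afun θ a (shiftMap^[j] p)) := by
  refine ⟨Afun_qpt hθ₀.le a, Real.log_pos haθ, fun p m hm hpm => ?_⟩
  have ha₀ : 0 < a := zero_lt_one.trans ha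
  have hp := periodic_of_shiftMap_iterate_eq hpm
  have hne : ∀ j : ℕ, shiftMap^[j] p ≠ qpt := fun j h =>
    not_periodic_qpt (by omega) (h ▸ hp.shiftMap_iterate j)
  have hsum : ((∑ j ∈ range m, (agreeLength (shiftMap^[j] p) qpt - 1) : ℕ) : ℝ) ≤ m := by
    exact_mod_cast sum_agreeLength_sub_one_le hp
  rw [le_inv_mul_iff₀ (by positivity)]
  calc (m : ℝ) * Real.log (a * θ) = m * Real.log a + m * Real.log θ := by
        rw [Real.log_mul ha₀.ne' hθ₀.ne']
        ring
    _ ≤ m * Real.log a +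
        ((∑ j ∈ range m, (agreeLength (shiftMap^[j] p) qpt - 1) : ℕ) : ℝ) * Real.log θ := by
        exact add_le_add_right (mul_le_mul_of_nonpos_right hsum (Real.log_neg hθ₀ hθ₁).le) _
    _ = ∑ j ∈ range m,
          (Real.log a + ((agreeLength (shiftMap^[j] p) qpt - 1 : ℕ) : ℝ) * Real.log θ) := by
        rw [sum_add_distrib, sum_const, card_range, nsmul_eq_mul, Nat.cast_sum, sum_mul]
    _ ≤ _ := sum_le_sum fun j _ => log_Afun_ge ha₀ hθ₀ hθ₁ (hne j)
end

section
/- Let λ ∈ ℝ, ε > 0, δ > 2ε, C ≥ 1, and let u ∈ ℝ^d be nonzero and (w_n)_{n∈ℤ} a family of vectors in ℝ^d with w₀ = u and ‖w_n‖ ≤ C·e^{λn + 2ε|n|}·‖u‖ for every n ∈ ℤ. Then the series Σ_{n∈ℤ} ‖w_n‖² e^{−2λn − 2δ|n|} converges, and its square root S satisfies ‖u‖ ≤ S ≤ C·(Σ_{n∈ℤ} e^{(4ε−2δ)|n|})^{1/2}·‖u‖. -/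
open Filter Topology

lemma summable_exp_abs_int {a : ℝ} (ha : a < 0) :
    Summable (fun n : ℤ => Real.exp (a * |(n : ℝ)|)) := by
  apply Summable.of_nat_of_neg
  · simpa [Int.cast_natCast, Nat.abs_cast, mul_comm] using
      Real.summable_exp_nat_mul_iff.mpr ha
  · simpa [Int.cast_natCast, Int.cast_neg, abs_neg, Nat.abs_cast, mul_comm] using
      Real.summable_exp_nat_mul_iff.mpr ha

/-- **Well-definedness and comparison of the δ-Lyapunov norm with the Euclidean norm.**
Let `λ ∈ ℝ`, `ε > 0`, `δ > 2ε`, `C ≥ 1`, `u ≠ 0` and `(w n)_{n ∈ ℤ}` with `w 0 = u` and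
`‖w n‖ ≤ C e^{λn + 2ε|n|} ‖u‖` for all `n ∈ ℤ`. Then `∑_{n ∈ ℤ} ‖w n‖² e^{-2λn - 2δ|n|}`
converges and its square root `S` satisfies
`‖u‖ ≤ S ≤ C (∑_{n ∈ ℤ} e^{(4ε - 2δ)|n|})^{1/2} ‖u‖`. -/
theorem lyapunov_norm_well_defined_and_comparison
    {d : ℕ} (lam ε δ C : ℝ) (hε : 0 < ε) (hδ : 2 * ε < δ) (hC : 1 ≤ C)
    (u : EuclideanSpace ℝ (Fin d)) (hu : u ≠ 0)
    (w : ℤ → EuclideanSpace ℝ (Fin d)) (hw0 : w 0 = u)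
    (hgrowth : ∀ n : ℤ, ‖w n‖ ≤ C * Real.exp (lam * n + 2 * ε * |(n : ℝ)|) * ‖u‖) :
    Summable (fun n : ℤ => ‖w n‖ ^ 2 * Real.exp (-2 * lam * n - 2 * δ * |(n : ℝ)|)) ∧
    ‖u‖ ≤ Real.sqrt (∑' n : ℤ, ‖w n‖ ^ 2 * Real.exp (-2 * lam * n - 2 * δ * |(n : ℝ)|)) ∧
    Real.sqrt (∑' n : ℤ, ‖w n‖ ^ 2 * Real.exp (-2 * lam * n - 2 * δ * |(n : ℝ)|)) ≤
      C * Real.sqrt (∑' n : ℤ, Real.exp ((4 * ε - 2 * δ) * |(n : ℝ)|)) * ‖u‖ := by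
  set f : ℤ → ℝ := fun n => ‖w n‖ ^ 2 * Real.exp (-2 * lam * n - 2 * δ * |(n : ℝ)|) with hf
  set g : ℤ → ℝ := fun n => Real.exp ((4 * ε - 2 * δ) * |(n : ℝ)|) with hg
  have ha : (4 : ℝ) * ε - 2 * δ < 0 := by linarith
  have hgsum : Summable g := summable_exp_abs_int ha
  have hfnonneg : ∀ n, 0 ≤ f n := fun n =>
    mul_nonneg (sq_nonneg _) (Real.exp_pos _).le
  have hbound : ∀ n : ℤ, f n ≤ C ^ 2 * ‖u‖ ^ 2 * g n := by
    intro n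
    have h1 : ‖w n‖ ^ 2 ≤ (C * Real.exp (lam * n + 2 * ε * |(n : ℝ)|) * ‖u‖) ^ 2 :=
      pow_le_pow_left₀ (norm_nonneg _) (hgrowth n) 2
    have h2 : f n ≤ (C * Real.exp (lam * n + 2 * ε * |(n : ℝ)|) * ‖u‖) ^ 2 *
        Real.exp (-2 * lam * n - 2 * δ * |(n : ℝ)|) :=
      mul_le_mul_of_nonneg_right h1 (Real.exp_pos _).le
    refine h2.trans (le_of_eq ?_)
    rw [mul_pow, mul_pow, ← Real.exp_nat_mul, hg,
      show ∀ a b c e : ℝ, a * b * c * e = a * c * (b * e) from fun _ _ _ _ => by ring,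
      ← Real.exp_add]
    congr 1
    push_cast
    ring
  have hfsum : Summable f :=
    Summable.of_nonneg_of_le hfnonneg hbound (hgsum.mul_left _)
  refine ⟨hfsum, ?_, ?_⟩
  · have h0 : f 0 ≤ ∑' n, f n := Summable.le_tsum hfsum 0 (fun n _ => hfnonneg n)
    have hf0 : f 0 = ‖u‖ ^ 2 := by simp [hf, hw0]
    have : ‖u‖ ^ 2 ≤ ∑' n, f n := hf0 ▸ h0
    calc ‖u‖ = Real.sqrt (‖u‖ ^ 2) := by
          rw [Real.sqrt_sq (norm_nonneg _)]
      _ ≤ Real.sqrt (∑' n, f n) := Real.sqrt_le_sqrt this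
  · have hts : ∑' n, f n ≤ C ^ 2 * ‖u‖ ^ 2 * ∑' n, g n := by
      calc ∑' n, f n ≤ ∑' n, C ^ 2 * ‖u‖ ^ 2 * g n :=
            Summable.tsum_le_tsum hbound hfsum (hgsum.mul_left _)
        _ = C ^ 2 * ‖u‖ ^ 2 * ∑' n, g n := tsum_mul_left
    calc Real.sqrt (∑' n, f n) ≤ Real.sqrt (C ^ 2 * ‖u‖ ^ 2 * ∑' n, g n) :=
          Real.sqrt_le_sqrt hts
      _ = C * Real.sqrt (∑' n, g n) * ‖u‖ := by
          rw [Real.sqrt_mul (by positivity), Real.sqrt_mul (by positivity),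
            Real.sqrt_sq (by linarith), Real.sqrt_sq (norm_nonneg _)]
          ring
end

section
/- Let f : M → M be a continuous map of a compact metric space (M,d) and μ a Borel probability measure on M. Let x ∈ M be a point in the basin of μ, i.e. the empirical measures (1/n)Σ_{i=0}^{n−1} δ_{f^i(x)} converge to μ in the weak* topology. Suppose (p_k)_{k∈ℕ} is a sequence of periodic points of f with periods n_k → ∞ and there are constants C, θ > 0 such that d(fʲ(x), fʲ(p_k)) ≤ (C/k)·e^{−θ·min(j, n_k−j)} for every k and every j = 0, 1, …, n_k. Then the periodic orbit measures μ_{p_k} = (1/n_k)Σ_{j=0}^{n_k−1} δ_{fʲ(p_k)} converge to μ in the weak* topology. -/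
open Filter Topology MeasureTheory

lemma avg_dirac_integral {M : Type*} [MetricSpace M] [MeasurableSpace M] [BorelSpace M]
    (ψ : M → ℝ) (n : ℕ) (g : ℕ → M) :
    ∫ y, ψ y ∂((n : ENNReal)⁻¹ • ∑ j ∈ Finset.range n, Measure.dirac (g j))
      = (n : ℝ)⁻¹ * ∑ j ∈ Finset.range n, ψ (g j) := by
  rw [integral_smul_measure, integral_finset_sum_measure]
  · simp [integral_dirac, ENNReal.toReal_inv, smul_eq_mul]
  · intro i _
    refine (integrable_const (ψ (g i))).congr ?_
    rw [MeasureTheory.ae_dirac_eq]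
    exact Filter.eventually_pure.2 rfl

/-- **Convergence of periodic orbit measures.** Let `f` be a continuous map of a compact
metric space and `μ` a Borel probability measure. Let `x` be a point in the basin of `μ`
(the empirical measures `(1/n) ∑_{i<n} δ_{fⁱx}` converge weak* to `μ`). If `p k` are periodic
points of periods `nk k → ∞` shadowing the orbit of `x` in the sense that
`d(fʲx, fʲ(p k)) ≤ (C/k) e^{-θ min(j, nk k - j)}` for all `j = 0, …, nk k`, then the periodic
orbit measures `μ_{p k} = (1/nk k) ∑_{j < nk k} δ_{fʲ(p k)}` converge weak* to `μ`. -/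
theorem periodic_orbit_measures_tendsto_of_shadowing
    {M : Type*} [MetricSpace M] [CompactSpace M] [MeasurableSpace M] [BorelSpace M]
    (f : M → M) (hf : Continuous f)
    (μ : Measure M) [IsProbabilityMeasure μ] (x : M)
    (hbasin : ∀ ψ : M → ℝ, Continuous ψ →
      Tendsto (fun n : ℕ => ∫ y, ψ y
          ∂((n : ENNReal)⁻¹ • ∑ i ∈ Finset.range n, MeasureTheory.Measure.dirac (f^[i] x)))
        atTop (𝓝 (∫ y, ψ y ∂μ)))
    (p : ℕ → M) (nk : ℕ → ℕ)
    (hper : ∀ k, 1 ≤ nk k ∧ f^[nk k] (p k) = p k)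
    (hnk : Tendsto nk atTop atTop)
    (C θ : ℝ) (hC : 0 < C) (hθ : 0 < θ)
    (hshadow : ∀ k : ℕ, 1 ≤ k → ∀ j ≤ nk k,
      dist (f^[j] x) (f^[j] (p k)) ≤
        (C / k) * Real.exp (-θ * min (j : ℝ) ((nk k : ℝ) - (j : ℝ)))) :
    ∀ ψ : M → ℝ, Continuous ψ →
      Tendsto (fun k : ℕ => ∫ y, ψ y
          ∂((nk k : ENNReal)⁻¹ •
            ∑ j ∈ Finset.range (nk k), MeasureTheory.Measure.dirac (f^[j] (p k))))
        atTop (𝓝 (∫ y, ψ y ∂μ)) := by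
  intro ψ hψ
  -- rewrite integrals as averages
  simp only [avg_dirac_integral ψ]
  have hbasin' := hbasin ψ hψ
  simp only [avg_dirac_integral ψ] at hbasin'
  set L := ∫ y, ψ y ∂μ
  set a : ℕ → ℝ := fun k => (nk k : ℝ)⁻¹ * ∑ j ∈ Finset.range (nk k), ψ (f^[j] (p k))
  set b : ℕ → ℝ := fun k => (nk k : ℝ)⁻¹ * ∑ j ∈ Finset.range (nk k), ψ (f^[j] x)
  have hb : Tendsto b atTop (𝓝 L) := hbasin'.comp hnk
  have hdiff : Tendsto (fun k => a k - b k) atTop (𝓝 0) := by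
    rw [NormedAddCommGroup.tendsto_nhds_zero]
    intro ε hε
    -- uniform continuity of ψ
    obtain ⟨δ, hδ, hδψ⟩ := Metric.uniformContinuous_iff.1
      (CompactSpace.uniformContinuous_of_continuous hψ) (ε / 2) (by positivity)
    have : ∀ᶠ k : ℕ in atTop, 1 ≤ k ∧ C / k < δ := by
      have h1 : ∀ᶠ k : ℕ in atTop, 1 ≤ k := eventually_ge_atTop 1
      have h2 : Tendsto (fun k : ℕ => C / k) atTop (𝓝 0) :=
        tendsto_const_nhds.div_atTop tendsto_natCast_atTop_atTop
      have h3 : ∀ᶠ k : ℕ in atTop, C / k < δ :=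
        (h2.eventually (eventually_lt_nhds hδ))
      exact h1.and h3
    filter_upwards [this] with k hk
    obtain ⟨hk1, hkδ⟩ := hk
    have hn1 : 1 ≤ nk k := (hper k).1
    have hnpos : (0 : ℝ) < (nk k : ℝ) := by exact_mod_cast hn1
    have hterm : ∀ j ∈ Finset.range (nk k), |ψ (f^[j] (p k)) - ψ (f^[j] x)| ≤ ε / 2 := by
      intro j hj
      have hjle : j ≤ nk k := le_of_lt (Finset.mem_range.1 hj)
      have hd := hshadow k hk1 j hjle
      have hexp : Real.exp (-θ * min (j : ℝ) ((nk k : ℝ) - (j : ℝ))) ≤ 1 := by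
        apply Real.exp_le_one_iff.2
        have hmin : (0 : ℝ) ≤ min (j : ℝ) ((nk k : ℝ) - (j : ℝ)) := by
          apply le_min (Nat.cast_nonneg _)
          have : (j : ℝ) ≤ (nk k : ℝ) := by exact_mod_cast hjle
          linarith
        nlinarith
      have hdlt : dist (f^[j] x) (f^[j] (p k)) < δ := by
        calc dist (f^[j] x) (f^[j] (p k))
            ≤ (C / k) * Real.exp (-θ * min (j : ℝ) ((nk k : ℝ) - (j : ℝ))) := hd
          _ ≤ (C / k) * 1 := by
              apply mul_le_mul_of_nonneg_left hexp
              positivity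
          _ = C / k := mul_one _
          _ < δ := hkδ
      have h2 : dist (ψ (f^[j] (p k))) (ψ (f^[j] x)) < ε / 2 :=
        hδψ (by rwa [dist_comm] at hdlt)
      rw [Real.dist_eq] at h2
      exact le_of_lt h2
    have : ‖a k - b k‖ ≤ ε / 2 := by
      have : a k - b k = (nk k : ℝ)⁻¹ *
          ∑ j ∈ Finset.range (nk k), (ψ (f^[j] (p k)) - ψ (f^[j] x)) := by
        simp [a, b, Finset.sum_sub_distrib, mul_sub]
      rw [this, Real.norm_eq_abs, abs_mul, abs_inv, Nat.abs_cast]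
      calc (nk k : ℝ)⁻¹ * |∑ j ∈ Finset.range (nk k), (ψ (f^[j] (p k)) - ψ (f^[j] x))|
          ≤ (nk k : ℝ)⁻¹ * ∑ j ∈ Finset.range (nk k), |ψ (f^[j] (p k)) - ψ (f^[j] x)| := by
            apply mul_le_mul_of_nonneg_left (Finset.abs_sum_le_sum_abs _ _)
            positivity
        _ ≤ (nk k : ℝ)⁻¹ * ∑ j ∈ Finset.range (nk k), (ε / 2) := by
            apply mul_le_mul_of_nonneg_left (Finset.sum_le_sum hterm)
            positivity
        _ = (nk k : ℝ)⁻¹ * ((nk k : ℝ) * (ε / 2)) := by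
            rw [Finset.sum_const, Finset.card_range, nsmul_eq_mul]
        _ = ε / 2 := by field_simp
    linarith [this, half_lt_self hε]
  have : Tendsto a atTop (𝓝 L) := by
    have := hdiff.add hb
    simpa using this
  exact this
end
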